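/- Let F be a field of characteristic p > 0 (p prime). In the universal enveloping algebra U(sl₂(F)), setting w = (h+1)² + 4fe, x = f^p, y = e^p, and z = h^p − h, the following identity holds: ∏_{k=0}^{p−1} (w − k²·1) = z² + 4xy. In other words, the Casimir-type element w satisfies the monic degree-p polynomial ∏_{k=0}^{p−1}(t − k²) − z² − 4xy over the central subalgebra generated by x, y, z. -/

import Mathlib

open LieAlgebra.SpecialLinear UniversalEnvelopingAlgebra

noncomputable section

/-- `e = E₁₂` in `sl₂(F)`. -/
def sl2E (F : Type*) [Field F] : sl (Fin 2) F := LieAlgebra.SpecialLinear.single 0 1 (by decide) (1 : F)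

/-- `f = E₂₁` in `sl₂(F)`. -/
def sl2F (F : Type*) [Field F] : sl (Fin 2) F := LieAlgebra.SpecialLinear.single 1 0 (by decide) (1 : F)

/-- `h = E₁₁ - E₂₂` in `sl₂(F)`. -/
def sl2H (F : Type*) [Field F] : sl (Fin 2) F :=
  ⟨Matrix.single 0 0 (1 : F) - Matrix.single 1 1 (1 : F), by
    change _ ∈ LinearMap.ker (Matrix.traceLinearMap (Fin 2) F F)
    rw [LinearMap.mem_ker, Matrix.traceLinearMap_apply]
    simp [Matrix.trace, Matrix.diag, Matrix.single, Fin.sum_univ_two]⟩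

/-! In any ring where `e, f, h` satisfy the `sl₂` relations, put `w = (h + 1)² + 4fe`. Then `w`
commutes with `e` and `h`, and `e (w - (h + m + 2)²) = (w - (h + m)²) e`; since
`4fe = w - (h + 1)²`, induction gives `(4f)ⁿ eⁿ = ∏_{k<n} (w - (h + 2k + 1)²)`.

For odd `p`, `2k + 1` runs through `𝔽_p` with `k`, so it remains to evaluate at `(H, W) = (h, w)`
the identity `∏_{c ∈ 𝔽_p} (W - c²) = (H^p - H)² + ∏_{c ∈ 𝔽_p} (W - (H + c)²)` in `𝔽_p[H][W]`.
It may be checked after substituting `W = T²`, where `∏_c (T ± (H + c)) = (T ± H)^p - (T ± H)` and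
Frobenius turns the right-hand product into `(T^p - T)² - (H^p - H)²`. For `p = 2`, where `4 = 0`,
both sides are `h⁴ + h²`. -/

open Polynomial

theorem FiniteField.prod_X_sub_C_eq_X_pow_card_sub_X (K : Type*) [Field K] [Fintype K] :
    ∏ a : K, (X - C a) = X ^ Fintype.card K - X := by
  have hmonic : (X ^ Fintype.card K - X : K[X]).Monic :=
    monic_X_pow_sub (by rw [degree_X]; exact_mod_cast Fintype.one_lt_card)
  have hcard : (X ^ Fintype.card K - X : K[X]).roots.card =
      (X ^ Fintype.card K - X : K[X]).natDegree := by
    rw [FiniteField.roots_X_pow_card_sub_X,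
      FiniteField.X_pow_card_sub_X_natDegree_eq K Fintype.one_lt_card]
    rfl
  simpa [FiniteField.roots_X_pow_card_sub_X] using
    prod_multiset_X_sub_C_of_monic_of_roots_card_eq hmonic hcard

theorem SemiconjBy.list_prod_map {M β : Type*} [Monoid M] {a : M} {x y : β → M}
    (hxy : ∀ i, SemiconjBy a (x i) (y i)) (l : List β) :
    SemiconjBy a (l.map x).prod (l.map y).prod := by
  induction l with
  | nil => exact SemiconjBy.one_right a
  | cons i l ih => simpa using (hxy i).mul_right ih

theorem Polynomial.commute_eval₂ {R A : Type*} [Semiring R] [Semiring A] {φ : R →+* A} {x y : A}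
    (hφ : ∀ a, Commute (φ a) y) (hx : Commute x y) (q : R[X]) : Commute (q.eval₂ φ x) y := by
  rw [eval₂_eq_sum]
  exact Commute.sum_left _ _ _ fun n _ => (hφ _).mul_left (hx.pow_left n)

theorem ZMod.commute_ringHom {p : ℕ} [NeZero p] {A : Type*} [Ring A] (φ : ZMod p →+* A)
    (a : ZMod p) (x : A) : Commute (φ a) x := by
  obtain ⟨k, rfl⟩ := ZMod.natCast_zmod_surjective a
  rw [map_natCast]
  exact Nat.cast_commute k x

theorem RingHom.map_prod_range_eq_list_prod {S A : Type*} [CommRing S] [Ring A] (ψ : S →+* A)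
    (q : ℕ → S) (n : ℕ) :
    ψ (∏ k ∈ Finset.range n, q k) = ((List.range n).map fun k => ψ (q k)).prod := by
  change ψ ((List.range n).map q).prod = _
  rw [map_list_prod, List.map_map]
  rfl

namespace ZMod

theorem prod_range_natCast {p : ℕ} [NeZero p] {M : Type*} [CommMonoid M] (g : ZMod p → M) :
    ∏ k ∈ Finset.range p, g k = ∏ c, g c :=
  Finset.prod_nbij' Nat.cast val (fun _ _ => Finset.mem_univ _)
    (fun c _ => Finset.mem_range.2 c.val_lt)
    (fun _ hk => val_natCast_of_lt (Finset.mem_range.1 hk))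
    (fun c _ => natCast_zmod_val c) (fun _ _ => rfl)

variable {p : ℕ} [Fact p.Prime]

theorem prod_range_two_mul_add_one (hp : p ≠ 2) {M : Type*} [CommMonoid M] (g : ZMod p → M) :
    ∏ k ∈ Finset.range p, g (2 * k + 1) = ∏ c, g c := by
  have h2 : (2 : ZMod p) ≠ 0 := Ring.two_ne_zero (by rwa [ringChar_zmod_n])
  rw [prod_range_natCast (fun c => g (2 * c + 1))]
  exact Equiv.prod_comp ((Equiv.mulLeft₀ 2 h2).trans (Equiv.addRight 1)) g

variable {R : Type*} [CommRing R] [Algebra (ZMod p) R]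

theorem prod_sub_algebraMap (T : R) :
    ∏ c : ZMod p, (T - algebraMap (ZMod p) R c) = T ^ p - T := by
  simpa [aeval_def, eval₂_finsetProd] using
    congrArg (aeval T) (FiniteField.prod_X_sub_C_eq_X_pow_card_sub_X (ZMod p))

theorem prod_add_algebraMap (T : R) :
    ∏ c : ZMod p, (T + algebraMap (ZMod p) R c) = T ^ p - T := by
  rw [← prod_sub_algebraMap, ← Equiv.prod_comp (Equiv.neg (ZMod p))]
  simp [sub_eq_add_neg]

variable [CharP R p]

theorem prod_sq_sub_add_algebraMap_sq (T H : R) :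
    ∏ c : ZMod p, (T ^ 2 - (H + algebraMap (ZMod p) R c) ^ 2) =
      (T ^ p - T) ^ 2 - (H ^ p - H) ^ 2 := by
  have hfactor (c : ZMod p) : T ^ 2 - (H + algebraMap (ZMod p) R c) ^ 2 =
      (T - H - algebraMap (ZMod p) R c) * (T + H + algebraMap (ZMod p) R c) := by ring
  simp only [hfactor, Finset.prod_mul_distrib, prod_sub_algebraMap, prod_add_algebraMap,
    sub_pow_char, add_pow_char]
  ring

theorem prod_X_sub_C_add_algebraMap_sq (H : R) :
    ∏ c : ZMod p, (X - C ((H + algebraMap (ZMod p) R c) ^ 2)) =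
      ∏ c : ZMod p, (X - C (algebraMap (ZMod p) R c ^ 2)) - C ((H ^ p - H) ^ 2) := by
  apply expand_injective two_pos
  have hH := prod_sq_sub_add_algebraMap_sq (X : R[X]) (C H)
  have h0 := prod_sq_sub_add_algebraMap_sq (p := p) (X : R[X]) 0
  simp only [zero_add, zero_pow (Fact.out : p.Prime).ne_zero, Polynomial.algebraMap_apply]
    at hH h0
  simp only [map_prod, map_sub, expand_X, expand_C, map_pow, map_add, hH, h0]
  ring

theorem prod_range_X_sub_C_natCast_sq (hp : p ≠ 2) (H : R) :
    ∏ k ∈ Finset.range p, (X - C ((k : R) ^ 2)) =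
      C ((H ^ p - H) ^ 2) + ∏ k ∈ Finset.range p, (X - C ((H + (2 * k + 1 : ℕ)) ^ 2)) := by
  have h := prod_X_sub_C_add_algebraMap_sq (p := p) H
  rw [← prod_range_natCast (fun c => X - C (algebraMap (ZMod p) R c ^ 2)),
    ← prod_range_two_mul_add_one hp (fun c => X - C ((H + algebraMap (ZMod p) R c) ^ 2))] at h
  simp only [map_add, map_mul, map_ofNat, map_one, map_natCast] at h
  push_cast
  rw [h]
  ring

end ZMod

section Sl2Relations

variable {A : Type*} [Ring A] {e f h : A}

variable (e f h) in
def casimir : A := (h + 1) ^ 2 + 4 * f * e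

theorem commute_h_casimir (hhe : h * e = e * h + 2 * e) (hhf : h * f = f * h - 2 * f) :
    Commute h (casimir e f h) := by
  have hfe : h * (f * e) = f * e * h :=
    calc h * (f * e) = (h * f) * e := by noncomm_ring
      _ = f * (h * e) - 2 * f * e := by rw [hhf]; noncomm_ring
      _ = f * e * h := by rw [hhe]; noncomm_ring
  calc h * casimir e f h = (h + 1) ^ 2 * h + 4 * (h * (f * e)) := by rw [casimir]; noncomm_ring
    _ = casimir e f h * h := by rw [hfe, casimir]; noncomm_ring

theorem semiconjBy_e_h_add_natCast (hhe : h * e = e * h + 2 * e) (m : ℕ) :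
    SemiconjBy e (h + (m + 2 : ℕ)) (h + m) :=
  calc e * (h + (m + 2 : ℕ)) = e * h + 2 * e + e * m := by push_cast; noncomm_ring
    _ = (h + m) * e := by rw [← hhe, ← (Nat.cast_commute m e).eq]; noncomm_ring

theorem commute_e_casimir (hhe : h * e = e * h + 2 * e) (hef : e * f = f * e + h) :
    Commute e (casimir e f h) := by
  have hsq : e * (h + (1 + 2 : ℕ)) ^ 2 = (h + (1 : ℕ)) ^ 2 * e :=
    (semiconjBy_e_h_add_natCast hhe 1).pow_right 2
  push_cast at hsq
  calc e * casimir e f h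
      = e * (h + 1) ^ 2 + 4 * (e * f) * e := by rw [casimir]; noncomm_ring
    _ = e * (h + 1) ^ 2 + 4 * (h * e) + 4 * f * e * e := by rw [hef]; noncomm_ring
    _ = e * (h + 3) ^ 2 + 4 * f * e * e := by rw [hhe]; noncomm_ring
    _ = casimir e f h * e := by rw [hsq, casimir]; noncomm_ring

theorem semiconjBy_e_casimir_sub_sq (hhe : h * e = e * h + 2 * e) (hef : e * f = f * e + h)
    (m : ℕ) :
    SemiconjBy e (casimir e f h - (h + (m + 2 : ℕ)) ^ 2)
      (casimir e f h - (h + m) ^ 2) :=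
  SemiconjBy.sub_right (commute_e_casimir hhe hef) ((semiconjBy_e_h_add_natCast hhe m).pow_right 2)

theorem four_mul_f_pow_mul_e_pow (hhe : h * e = e * h + 2 * e) (hef : e * f = f * e + h)
    (n : ℕ) :
    (4 * f) ^ n * e ^ n =
      ((List.range n).map fun k => casimir e f h - (h + (2 * k + 1 : ℕ)) ^ 2).prod := by
  induction n with
  | zero => simp
  | succ n ih =>
    have hshift : SemiconjBy e
        ((List.range n).map fun k => casimir e f h - (h + (2 * (k + 1) + 1 : ℕ)) ^ 2).prod
        ((List.range n).map fun k => casimir e f h - (h + (2 * k + 1 : ℕ)) ^ 2).prod :=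
      SemiconjBy.list_prod_map (fun k => semiconjBy_e_casimir_sub_sq hhe hef (2 * k + 1)) _
    calc (4 * f) ^ (n + 1) * e ^ (n + 1) = 4 * f * ((4 * f) ^ n * e ^ n * e) := by
          rw [pow_succ', pow_succ]; noncomm_ring
      _ = 4 * f * e * ((List.range n).map fun k =>
            casimir e f h - (h + (2 * (k + 1) + 1 : ℕ)) ^ 2).prod := by
          rw [ih, ← hshift.eq]; noncomm_ring
      _ = _ := by rw [List.prod_range_succ']; push_cast; simp only [casimir]; noncomm_ring

theorem list_prod_casimir_sub_sq_of_ne_two {p : ℕ} [Fact p.Prime] (hp : p ≠ 2)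
    (φ : ZMod p →+* A) (hhe : h * e = e * h + 2 * e) (hhf : h * f = f * h - 2 * f)
    (hef : e * f = f * e + h) :
    ((List.range p).map fun k : ℕ => casimir e f h - (k : A) ^ 2).prod =
      (h ^ p - h) ^ 2 + 4 * f ^ p * e ^ p := by
  let ev : (ZMod p)[X][X] →+* A :=
    eval₂RingHom' (eval₂RingHom' φ h fun a => ZMod.commute_ringHom φ a h) (casimir e f h)
      (commute_eval₂ (fun a => ZMod.commute_ringHom φ a _) (commute_h_casimir hhe hhf))
  have hfour : 4 * f ^ p * e ^ p = (4 * f) ^ p * e ^ p := by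
    rw [(Commute.ofNat_left 4 f).mul_pow, ← map_ofNat φ 4, ← map_pow, ZMod.pow_card]
  have hev := congrArg ev (ZMod.prod_range_X_sub_C_natCast_sq hp X)
  have hevX : ev X = casimir e f h := eval₂_X _ _
  have hevCX : ev (C X) = h := (eval₂_C _ _).trans (eval₂_X _ _)
  simp only [RingHom.map_prod_range_eq_list_prod, map_sub, map_add, map_pow, map_natCast, hevX,
    hevCX] at hev
  rw [hfour, four_mul_f_pow_mul_e_pow hhe hef, hev]

theorem list_prod_casimir_sub_sq_of_two (h2 : (2 : A) = 0) :
    ((List.range 2).map fun k : ℕ => casimir e f h - (k : A) ^ 2).prod =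
      (h ^ 2 - h) ^ 2 + 4 * f ^ 2 * e ^ 2 := by
  have h4 : (4 : A) = 0 := by rw [show (4 : A) = 2 * 2 by norm_num, h2, zero_mul]
  simp only [casimir, h4, zero_mul, add_zero, List.range_succ, List.range_zero, List.nil_append,
    List.map_cons, List.map_nil, List.prod_cons, List.prod_nil, List.cons_append, mul_one,
    Nat.cast_zero, Nat.cast_one]
  calc _ = (h ^ 2 - h) ^ 2 + 2 * (3 * h ^ 3 + 2 * h ^ 2 + h) := by noncomm_ring
    _ = _ := by rw [h2]; simp

theorem list_prod_casimir_sub_sq {p : ℕ} [Fact p.Prime] (φ : ZMod p →+* A)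
    (hhe : h * e = e * h + 2 * e) (hhf : h * f = f * h - 2 * f) (hef : e * f = f * e + h) :
    ((List.range p).map fun k : ℕ => casimir e f h - (k : A) ^ 2).prod =
      (h ^ p - h) ^ 2 + 4 * f ^ p * e ^ p := by
  rcases eq_or_ne p 2 with rfl | hp
  · exact list_prod_casimir_sub_sq_of_two (by rw [← map_ofNat φ 2]; exact map_zero φ)
  · exact list_prod_casimir_sub_sq_of_ne_two hp φ hhe hhf hef

end Sl2Relations

section Sl2

variable (F : Type*) [Field F]

attribute [local instance 100] LieRing.ofAssociativeRing

theorem lie_sl2H_sl2E : ⁅sl2H F, sl2E F⁆ = (2 : F) • sl2E F := by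
  ext i j
  fin_cases i <;> fin_cases j <;>
    norm_num [sl2H, sl2E, Ring.lie_def, Matrix.mul_apply, Matrix.single]

theorem lie_sl2H_sl2F : ⁅sl2H F, sl2F F⁆ = -((2 : F) • sl2F F) := by
  ext i j
  fin_cases i <;> fin_cases j <;>
    norm_num [sl2H, sl2F, Ring.lie_def, Matrix.mul_apply, Matrix.single]

theorem lie_sl2E_sl2F : ⁅sl2E F, sl2F F⁆ = sl2H F := by
  ext i j
  fin_cases i <;> fin_cases j <;>
    simp [sl2H, sl2E, sl2F, Ring.lie_def, Matrix.mul_apply, Matrix.single]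

theorem ι_mul_sub_mul {L : Type*} [LieRing L] [LieAlgebra F L] (x y : L) :
    ι F x * ι F y - ι F y * ι F x = ι F ⁅x, y⁆ := by
  rw [LieHom.map_lie, Ring.lie_def]

theorem ι_sl2H_mul_ι_sl2E :
    ι F (sl2H F) * ι F (sl2E F) = ι F (sl2E F) * ι F (sl2H F) + 2 * ι F (sl2E F) := by
  rw [← sub_eq_iff_eq_add', ι_mul_sub_mul, lie_sl2H_sl2E, map_smul, Algebra.smul_def, map_ofNat]

theorem ι_sl2H_mul_ι_sl2F :
    ι F (sl2H F) * ι F (sl2F F) = ι F (sl2F F) * ι F (sl2H F) - 2 * ι F (sl2F F) := by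
  rw [← sub_add_cancel (ι F (sl2H F) * ι F (sl2F F)) (ι F (sl2F F) * ι F (sl2H F)), ι_mul_sub_mul,
    lie_sl2H_sl2F, map_neg, map_smul, Algebra.smul_def, map_ofNat]
  abel

theorem ι_sl2E_mul_ι_sl2F :
    ι F (sl2E F) * ι F (sl2F F) = ι F (sl2F F) * ι F (sl2E F) + ι F (sl2H F) := by
  rw [← sub_eq_iff_eq_add', ι_mul_sub_mul, lie_sl2E_sl2F]

end Sl2

/-- In `U(sl₂(F))` over a field of prime characteristic `p`, with `w = (h+1)² + 4fe`,
`x = f^p`, `y = e^p`, `z = h^p − h`, one has `∏_{k=0}^{p−1} (w − k²) = z² + 4xy`. -/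
theorem casimir_integral_equation (F : Type*) [Field F] (p : ℕ) (hp : p.Prime) [CharP F p] :
    let e := ι F (sl2E F)
    let f := ι F (sl2F F)
    let h := ι F (sl2H F)
    let w := (h + 1) ^ 2 + 4 * f * e
    let x := f ^ p
    let y := e ^ p
    let z := h ^ p - h
    ((List.range p).map fun k : ℕ =>
        w - ((k : UniversalEnvelopingAlgebra F (sl (Fin 2) F)) ^ 2)).prod
      = z ^ 2 + 4 * x * y := by
  have : Fact p.Prime := ⟨hp⟩
  exact list_prod_casimir_sub_sq ((algebraMap F _).comp (ZMod.castHom (dvd_refl p) F))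
    (ι_sl2H_mul_ι_sl2E F) (ι_sl2H_mul_ι_sl2F F) (ι_sl2E_mul_ι_sl2F F)

end
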